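/- arXiv:2512.10851 — 2 statements merged into one kernel-verified Lean document; each statement's English description precedes it below -/
import Mathlib

section
/- Under the additional assumption that λ_i + λ̄_j ≠ 0 for all i, j ∈ {1,…,n}, the matrix P_C := Σ_{i=1}^{n} Σ_{j=1}^{n} { −(λ_i + λ̄_j)^{−1} · x_i x_j^† / (N'(λ_i) · conj(N'(λ_j))) }_H satisfies the algebraic Lyapunov equation A_C P_C + P_C A_C^T = − e_n e_n^T. -/
open Matrix Finset

noncomputable section

/-- `N(s) = s^n + ∑_{k<n} a_k s^k`, the characteristic polynomial as a function. -/
def Npoly (n : ℕ) (a : Fin n → ℝ) : ℂ → ℂ :=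
  fun s => s ^ n + ∑ k : Fin n, (a k : ℂ) * s ^ (k : ℕ)

/-- The companion matrix `A_C` (over `ℂ`, with real entries). -/
def Acomp (n : ℕ) (a : Fin n → ℝ) : Matrix (Fin n) (Fin n) ℂ :=
  Matrix.of fun μ ν =>
    if (μ : ℕ) + 1 = n then -(a ν : ℂ)
    else if (ν : ℕ) = (μ : ℕ) + 1 then 1 else 0

/-- The right eigenvector `x_i`, `(x_i)_μ = λ_i^{μ-1}` (0-based: `λ_i^μ`). -/
def xvec (n : ℕ) (lam : Fin n → ℂ) (i : Fin n) : Fin n → ℂ :=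
  fun μ => lam i ^ (μ : ℕ)

/-- The left eigenvector `y_i`, `(y_i)_μ = -∑_{k=μ}^{n} a_k λ_i^{k-μ}` (1-based indices,
with `a_n = 1`). -/
def yvec (n : ℕ) (a : Fin n → ℝ) (lam : Fin n → ℂ) (i : Fin n) : Fin n → ℂ :=
  fun μ => -(lam i ^ (n - 1 - (μ : ℕ)) +
    ∑ k : Fin n, if (μ : ℕ) < (k : ℕ) then (a k : ℂ) * lam i ^ ((k : ℕ) - (μ : ℕ) - 1) else 0)

/-- The residue matrix `R_i = x_i y_i^T / (-N'(λ_i))`. -/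
def Rres (n : ℕ) (a : Fin n → ℝ) (lam : Fin n → ℂ) (i : Fin n) :
    Matrix (Fin n) (Fin n) ℂ :=
  (-(deriv (Npoly n a) (lam i)))⁻¹ • Matrix.vecMulVec (xvec n lam i) (yvec n a lam i)

/-- `J = diag((-1)^1, …, (-1)^n)`. -/
def Jmat (n : ℕ) : Matrix (Fin n) (Fin n) ℂ :=
  Matrix.diagonal fun μ => (-1 : ℂ) ^ ((μ : ℕ) + 1)

/-- Hermitian part `{M}_H = (M + Mᴴ)/2`. -/
def hermPart {m : Type*} [Fintype m] (M : Matrix m m ℂ) : Matrix m m ℂ :=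
  (2 : ℂ)⁻¹ • (M + Mᴴ)

/-- The last standard basis vector `e_n`. -/
def evec (n : ℕ) : Fin n → ℂ := fun μ => if (μ : ℕ) = n - 1 then 1 else 0

/-!
`A_C x_i = λ_i x_i`, and since `A_C` is real also `A_C x̄_j = λ̄_j x̄_j`. Hence the Lyapunov
operator `L X = A_C X + X A_Cᵀ` multiplies `x_i x_jᴴ` by `λ_i + λ̄_j`, cancelling the weight
`-(λ_i + λ̄_j)⁻¹`, and, `A_C` being real, `L` commutes with taking Hermitian parts. What is left
is `-(∑ x_i / N'(λ_i)) (∑ x_j / N'(λ_j))ᴴ`, and `∑ λ_i ^ μ / N'(λ_i) = [μ = n - 1]` for `μ < n`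
is the Lagrange interpolation formula for the coefficient of `s ^ (n - 1)` in `s ^ μ`.
-/

open Polynomial

namespace Lagrange

theorem eq_nodal_of_monic_of_degree_eq {R ι : Type*} [CommRing R] [IsDomain R] {s : Finset ι}
    {v : ι → R} {p : R[X]} (hvs : Set.InjOn v s) (hp : p.Monic)
    (hdeg : p.degree = #s) (hroot : ∀ i ∈ s, p.eval (v i) = 0) : p = nodal s v :=
  eq_of_degree_le_of_eval_index_eq s hvs hdeg.le (by rw [hdeg, degree_nodal])
    (by rw [hp.leadingCoeff, nodal_monic.leadingCoeff])
    (fun i hi => by rw [hroot i hi, eval_nodal_at_node hi])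

variable {F ι : Type*} [Field F] [DecidableEq ι] {s : Finset ι} {v : ι → F}

theorem sum_pow_div_eval_derivative_nodal (hvs : Set.InjOn v s) {k : ℕ} (hk : k < #s) :
    ∑ i ∈ s, v i ^ k / (derivative (nodal s v)).eval (v i) = if k = #s - 1 then 1 else 0 := by
  calc ∑ i ∈ s, v i ^ k / (derivative (nodal s v)).eval (v i)
      = ∑ i ∈ s, (X ^ k : F[X]).eval (v i) / ∏ j ∈ s.erase i, (v i - v j) :=
        sum_congr rfl fun i hi => by
          rw [eval_nodal_derivative_eval_node_eq hi, eval_nodal, eval_pow, eval_X]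
    _ = (X ^ k : F[X]).coeff (#s - 1) :=
        (coeff_eq_sum hvs (by rw [degree_X_pow]; exact_mod_cast hk)).symm
    _ = if k = #s - 1 then 1 else 0 := by rw [coeff_X_pow]; exact if_congr eq_comm rfl rfl

end Lagrange

namespace Matrix

variable {m R : Type*} [Fintype m]

def lyapunov [CommRing R] (A : Matrix m m R) : Matrix m m R →ₗ[R] Matrix m m R where
  toFun X := A * X + X * Aᵀ
  map_add' X Y := by rw [Matrix.mul_add, Matrix.add_mul]; abel
  map_smul' c X := by rw [Matrix.mul_smul, Matrix.smul_mul, smul_add]; rfl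

@[simp]
theorem lyapunov_apply [CommRing R] (A X : Matrix m m R) : lyapunov A X = A * X + X * Aᵀ :=
  rfl

theorem lyapunov_vecMulVec [CommRing R] {A : Matrix m m R} {x y : m → R} {α β : R}
    (hx : A *ᵥ x = α • x) (hy : A *ᵥ y = β • y) :
    lyapunov A (vecMulVec x y) = (α + β) • vecMulVec x y := by
  rw [lyapunov_apply, mul_vecMulVec, vecMulVec_mul, vecMul_transpose, hx, hy, smul_vecMulVec,
    vecMulVec_smul, add_smul]

theorem mulVec_star_of_map_star [CommRing R] [StarRing R] {A : Matrix m m R}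
    (hA : A.map star = A) (x : m → R) : A *ᵥ star x = star (A *ᵥ x) := by
  rw [star_mulVec, ← mulVec_transpose, conjTranspose_transpose, hA]

end Matrix

section HermPart

variable {m : Type*} [Fintype m]

theorem hermPart_sum {ι : Type*} (s : Finset ι) (M : ι → Matrix m m ℂ) :
    hermPart (∑ i ∈ s, M i) = ∑ i ∈ s, hermPart (M i) := by
  simp only [hermPart, conjTranspose_sum, ← Finset.sum_add_distrib, Finset.smul_sum]

theorem hermPart_of_isHermitian {M : Matrix m m ℂ} (hM : M.IsHermitian) : hermPart M = M := by
  rw [hermPart, hM.eq, ← two_smul ℂ M, smul_smul, inv_mul_cancel₀ two_ne_zero, one_smul]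

theorem lyapunov_hermPart {A : Matrix m m ℂ} (hA : A.map star = A) (X : Matrix m m ℂ) :
    lyapunov A (hermPart X) = hermPart (lyapunov A X) := by
  have hAH : Aᴴ = Aᵀ := by rw [conjTranspose, transpose_map, hA]
  have hATH : Aᵀᴴ = A := by
    rw [conjTranspose_transpose_eq_transpose_conjTranspose, hAH, transpose_transpose]
  simp only [lyapunov_apply, hermPart, conjTranspose_add, conjTranspose_mul, hAH, hATH,
    Matrix.mul_smul, Matrix.smul_mul, Matrix.mul_add, Matrix.add_mul, smul_add]
  abel

end HermPart

section Companion

variable {n : ℕ} {a : Fin n → ℝ} {lam : Fin n → ℂ}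

def Npolynomial (n : ℕ) (a : Fin n → ℝ) : ℂ[X] :=
  X ^ n + ∑ k : Fin n, C (a k : ℂ) * X ^ (k : ℕ)

theorem eval_Npolynomial (z : ℂ) : (Npolynomial n a).eval z = Npoly n a z := by
  simp [Npolynomial, Npoly, eval_finsetSum]

theorem deriv_Npoly (z : ℂ) : deriv (Npoly n a) z = (derivative (Npolynomial n a)).eval z := by
  have h : Npoly n a = fun z => (Npolynomial n a).eval z :=
    funext fun z => (eval_Npolynomial z).symm
  rw [h, Polynomial.deriv]

theorem monic_Npolynomial : (Npolynomial n a).Monic :=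
  monic_X_pow_add (degree_sum_fin_lt _)

theorem degree_Npolynomial : (Npolynomial n a).degree = n := by
  have hlow : (∑ k : Fin n, C (a k : ℂ) * X ^ (k : ℕ)).degree < (X ^ n : ℂ[X]).degree := by
    rw [degree_X_pow]; exact degree_sum_fin_lt _
  rw [Npolynomial, degree_add_eq_left_of_degree_lt hlow, degree_X_pow]

theorem Npolynomial_eq_nodal (hroot : ∀ i, Npoly n a (lam i) = 0)
    (hdist : Function.Injective lam) : Npolynomial n a = Lagrange.nodal univ lam :=
  Lagrange.eq_nodal_of_monic_of_degree_eq hdist.injOn monic_Npolynomial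
    (by rw [degree_Npolynomial, card_univ, Fintype.card_fin])
    (fun i _ => by rw [eval_Npolynomial, hroot i])

theorem sum_xvec_div_deriv_Npoly (hroot : ∀ i, Npoly n a (lam i) = 0)
    (hdist : Function.Injective lam) (μ : Fin n) :
    ∑ i, xvec n lam i μ / deriv (Npoly n a) (lam i) = evec n μ := by
  have h := Lagrange.sum_pow_div_eval_derivative_nodal hdist.injOn (s := univ)
    (k := μ) (by rw [card_univ, Fintype.card_fin]; exact μ.2)
  simpa only [xvec, evec, deriv_Npoly, Npolynomial_eq_nodal hroot hdist, card_univ,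
    Fintype.card_fin] using h

theorem Acomp_map_star : (Acomp n a).map star = Acomp n a := by
  ext μ ν
  simp only [map_apply, Acomp, of_apply]
  split_ifs <;> simp

theorem Acomp_mulVec_xvec {i : Fin n} (hroot : Npoly n a (lam i) = 0) :
    Acomp n a *ᵥ xvec n lam i = lam i • xvec n lam i := by
  ext μ
  simp only [mulVec, dotProduct, Acomp, of_apply, xvec, Pi.smul_apply, smul_eq_mul, ← pow_succ']
  by_cases hμ : (μ : ℕ) + 1 = n
  · simp only [hμ, if_true, neg_mul, sum_neg_distrib]
    rw [Npoly] at hroot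
    linear_combination -hroot
  · have hlt : (μ : ℕ) + 1 < n := lt_of_le_of_ne μ.2 hμ
    simp only [hμ, if_false, ite_mul, one_mul, zero_mul]
    rw [Fintype.sum_eq_single ⟨(μ : ℕ) + 1, hlt⟩ fun ν hν => if_neg fun h => hν (Fin.ext h),
      if_pos rfl]

theorem Acomp_mulVec_conj_xvec {i : Fin n} (hroot : Npoly n a (lam i) = 0) :
    Acomp n a *ᵥ (fun μ => starRingEnd ℂ (xvec n lam i μ)) =
      starRingEnd ℂ (lam i) • fun μ => starRingEnd ℂ (xvec n lam i μ) := by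
  have h := mulVec_star_of_map_star (Acomp_map_star (a := a)) (xvec n lam i)
  rwa [Acomp_mulVec_xvec hroot, star_smul] at h

theorem star_evec : star (evec n) = evec n := by
  ext μ
  simp only [Pi.star_apply, evec]
  split_ifs <;> simp

theorem sum_sum_smul_vecMulVec_xvec (hroot : ∀ i, Npoly n a (lam i) = 0)
    (hdist : Function.Injective lam) :
    ∑ i, ∑ j, -(deriv (Npoly n a) (lam i) * starRingEnd ℂ (deriv (Npoly n a) (lam j)))⁻¹ •
        vecMulVec (xvec n lam i) (fun μ => starRingEnd ℂ (xvec n lam j μ)) =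
      -vecMulVec (evec n) (evec n) := by
  ext μ ν
  have hμ := sum_xvec_div_deriv_Npoly hroot hdist μ
  have hν := congrArg star (sum_xvec_div_deriv_Npoly hroot hdist ν)
  rw [star_sum, ← Pi.star_apply, star_evec] at hν
  simp only [Matrix.sum_apply, Matrix.smul_apply, vecMulVec_apply, Matrix.neg_apply, smul_eq_mul]
  rw [← hμ, ← hν, sum_mul_sum, ← sum_neg_distrib]
  refine sum_congr rfl fun i _ => ?_
  rw [← sum_neg_distrib]
  refine sum_congr rfl fun j _ => ?_
  simp only [star_div₀, Complex.star_def]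
  ring

end Companion

theorem stmt1_general (n : ℕ) (a : Fin n → ℝ) (lam : Fin n → ℂ)
    (hroot : ∀ i, Npoly n a (lam i) = 0)
    (hdist : Function.Injective lam)
    (hsum : ∀ i j, lam i + (starRingEnd ℂ) (lam j) ≠ 0)
    (P : Matrix (Fin n) (Fin n) ℂ)
    (hP : P = ∑ i, ∑ j, hermPart
        ((-(lam i + (starRingEnd ℂ) (lam j))⁻¹ *
            (deriv (Npoly n a) (lam i) * (starRingEnd ℂ) (deriv (Npoly n a) (lam j)))⁻¹) •
          Matrix.vecMulVec (xvec n lam i) (fun μ => (starRingEnd ℂ) (xvec n lam j μ)))) :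
    Acomp n a * P + P * (Acomp n a)ᵀ = -Matrix.vecMulVec (evec n) (evec n) := by
  have hterm : ∀ i j (d : ℂ),
      lyapunov (Acomp n a) ((-(lam i + starRingEnd ℂ (lam j))⁻¹ * d) •
          vecMulVec (xvec n lam i) (fun μ => starRingEnd ℂ (xvec n lam j μ))) =
        -d • vecMulVec (xvec n lam i) (fun μ => starRingEnd ℂ (xvec n lam j μ)) := by
    intro i j d
    rw [map_smul, lyapunov_vecMulVec (Acomp_mulVec_xvec (hroot i))
      (Acomp_mulVec_conj_xvec (hroot j)), smul_smul]
    field_simp [hsum i j]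
  have hherm : (-vecMulVec (evec n) (evec n)).IsHermitian := by
    rw [IsHermitian, conjTranspose_neg, conjTranspose_vecMulVec, star_evec]
  rw [← lyapunov_apply, hP]
  simp only [← hermPart_sum, lyapunov_hermPart (Acomp_map_star (a := a)), map_sum, hterm,
    sum_sum_smul_vecMulVec_xvec hroot hdist, hermPart_of_isHermitian hherm]

/-- If `λ_i + conj λ_j ≠ 0` for all `i, j`, then
`P_C = ∑ i j { -(λ_i + conj λ_j)⁻¹ x_i x_jᴴ / (N'(λ_i) conj (N'(λ_j))) }_H` satisfies the
algebraic Lyapunov equation `A_C P_C + P_C A_Cᵀ = -e_n e_nᵀ`. -/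
theorem stmt1 (n : ℕ) (hn : 0 < n) (a : Fin n → ℝ) (lam : Fin n → ℂ)
    (hroot : ∀ i, Npoly n a (lam i) = 0)
    (hdist : Function.Injective lam)
    (hNp : ∀ i, deriv (Npoly n a) (lam i) ≠ 0)
    (hsum : ∀ i j, lam i + (starRingEnd ℂ) (lam j) ≠ 0)
    (P : Matrix (Fin n) (Fin n) ℂ)
    (hP : P = ∑ i, ∑ j, hermPart
        ((-(lam i + (starRingEnd ℂ) (lam j))⁻¹ *
            (deriv (Npoly n a) (lam i) * (starRingEnd ℂ) (deriv (Npoly n a) (lam j)))⁻¹) •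
          Matrix.vecMulVec (xvec n lam i) (fun μ => (starRingEnd ℂ) (xvec n lam j μ)))) :
    Acomp n a * P + P * (Acomp n a)ᵀ = -Matrix.vecMulVec (evec n) (evec n) :=
  stmt1_general n a lam hroot hdist hsum P hP

end
end

section
/- The matrix-valued function P(t) := Σ_{i=1}^{p} Σ_{k=1}^{n_i} Â_k^{(i)} B B^T [ (−λ_i I − A^T)^{−k} − Σ_{l=1}^{k} (−λ_i I − A^T)^{−l} (t^{k−l}/(k−l)!) exp((λ_i I + A^T) t) ] satisfies P(0) = 0 and, for every t ∈ ℝ, P is differentiable at t with derivative P'(t) = A P(t) + P(t) A^T + B B^T, where exp denotes the matrix exponential. -/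
/-!
Write `G = B Bᵀ`, `N = λ I + Aᵀ`, `W = (-λ I - Aᵀ)⁻¹ = -N⁻¹` and `Q_k(t)` for the bracket
multiplying `Â_k G`. It is `∫₀ᵗ s^{k-1}/(k-1)! e^{sN} ds`: from the recursion
`Q_{k+1} = W (Q_k - t^k/k! e^{tN})`, `Q_0 = 1`, one gets `Q_k(0) = 0`,
`Q_k' = t^{k-1}/(k-1)! e^{tN}` and `Q_k N = Q_k' - Q_{k-1}`. Writing `A Â_k = λ Â_k + Â_{k+1}`,
the Sylvester operator `X ↦ A X + X Aᵀ` sends `Â_k G Q_k` to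
`Â_{k+1} G Q_k + Â_k G Q_k' - Â_k G Q_{k-1}`, so on each block the sum over `k` telescopes to
`P_i' - Â_1 G`. Summing over the blocks and using `∑ᵢ Â_1^{(i)} = I` gives `P' = A P + P Aᵀ + G`.
-/

open Matrix Finset NormedSpace

noncomputable section

theorem Finset.sum_Icc_one_eq_sum_range {M : Type*} [AddCommMonoid M] (f : ℕ → M) (k : ℕ) :
    ∑ l ∈ Icc 1 k, f l = ∑ j ∈ range k, f (j + 1) := by
  rw [range_eq_Ico, sum_Ico_add' f 0 k 1]
  rfl

section JordanChain

variable {R : Type*} [Ring R] [Algebra ℂ R]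

theorem sum_jordanChain_mul_add_mul (A M G : R) (lam : ℂ) (Ah : ℕ → R) (n : ℕ) (hn : 0 < n)
    (htop : A * Ah n = lam • Ah n)
    (hchain : ∀ k, 1 ≤ k → k < n → A * Ah k = lam • Ah k + Ah (k + 1))
    (Q D : ℕ → R) (hQ0 : Q 0 = 1) (hQ : ∀ k, Q (k + 1) * (lam • 1 + M) = D k - Q k) :
    A * ∑ k ∈ Icc 1 n, Ah k * G * Q k + (∑ k ∈ Icc 1 n, Ah k * G * Q k) * M + Ah 1 * G =
      ∑ k ∈ Icc 1 n, Ah k * G * D (k - 1) := by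
  obtain ⟨n, rfl⟩ : ∃ n', n = n' + 1 := ⟨n - 1, by omega⟩
  have hterm : ∀ k, A * (Ah (k + 1) * G * Q (k + 1)) + Ah (k + 1) * G * Q (k + 1) * M =
      (A * Ah (k + 1) - lam • Ah (k + 1)) * G * Q (k + 1) + Ah (k + 1) * G * D k
        - Ah (k + 1) * G * Q k := by
    intro k
    rw [add_sub_assoc, ← mul_sub, ← hQ k]
    simp only [mul_add, sub_mul, smul_mul_assoc, mul_smul_comm, mul_one, mul_assoc]
    abel
  have hshift : ∑ k ∈ range (n + 1), (A * Ah (k + 1) - lam • Ah (k + 1)) * G * Q (k + 1) =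
      ∑ k ∈ range n, Ah (k + 1 + 1) * G * Q (k + 1) := by
    rw [sum_range_succ, htop, sub_self, zero_mul, zero_mul, add_zero]
    refine sum_congr rfl fun k hk => ?_
    rw [hchain (k + 1) (Nat.le_add_left _ _) (by simp at hk; omega), add_sub_cancel_left]
  rw [mul_sum, sum_mul, ← sum_add_distrib, sum_Icc_one_eq_sum_range, sum_Icc_one_eq_sum_range]
  simp only [hterm, Nat.add_sub_cancel]
  rw [sum_sub_distrib, sum_add_distrib, hshift, sum_range_succ' (fun k => Ah (k + 1) * G * Q k),
    hQ0, mul_one]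
  abel

end JordanChain

def powDivFactorial (j : ℕ) (t : ℝ) : ℂ := (t : ℂ) ^ j / j.factorial

theorem powDivFactorial_zero (t : ℝ) : powDivFactorial 0 t = 1 := by
  simp [powDivFactorial]

theorem powDivFactorial_succ_apply_zero (j : ℕ) : powDivFactorial (j + 1) 0 = 0 := by
  simp [powDivFactorial]

theorem hasDerivAt_powDivFactorial_succ (j : ℕ) (t : ℝ) :
    HasDerivAt (powDivFactorial (j + 1)) (powDivFactorial j t) t := by
  have h : HasDerivAt (powDivFactorial (j + 1)) _ t :=
    ((hasDerivAt_pow (j + 1) (t : ℂ)).comp_ofReal).div_const ((j + 1).factorial : ℂ)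
  refine h.congr_deriv ?_
  rw [powDivFactorial, Nat.factorial_succ, Nat.add_sub_cancel]
  push_cast
  field_simp

section PowExpIntegral

variable {𝔸 : Type*} [NormedRing 𝔸] [NormedAlgebra ℂ 𝔸]

/-- When `W * N = -1` and `k ≥ 1`, this is `∫₀ᵗ s ^ (k - 1) / (k - 1)! • exp (s N) ds`. -/
def powExpIntegral (W N : 𝔸) (k : ℕ) (t : ℝ) : 𝔸 :=
  W ^ k - ∑ l ∈ Icc 1 k, powDivFactorial (k - l) t • (W ^ l * exp ((t : ℂ) • N))

theorem powExpIntegral_zero (W N : 𝔸) (t : ℝ) : powExpIntegral W N 0 t = 1 := by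
  simp [powExpIntegral]

theorem powExpIntegral_succ (W N : 𝔸) (k : ℕ) (t : ℝ) :
    powExpIntegral W N (k + 1) t =
      W * (powExpIntegral W N k t - powDivFactorial k t • exp ((t : ℂ) • N)) := by
  set E := exp ((t : ℂ) • N)
  have hsum : ∑ l ∈ Icc 1 (k + 1), powDivFactorial (k + 1 - l) t • (W ^ l * E) =
      W * (∑ l ∈ Icc 1 k, powDivFactorial (k - l) t • (W ^ l * E)
        + powDivFactorial k t • E) := by
    simp only [sum_Icc_one_eq_sum_range, sum_range_succ' _ k,
      Nat.add_sub_add_right, pow_succ', pow_zero, one_mul, Nat.sub_zero, mul_add,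
      mul_sum, mul_smul_comm, mul_assoc]
  rw [powExpIntegral, powExpIntegral, hsum, pow_succ', mul_sub, mul_sub, mul_add, sub_sub]

theorem powExpIntegral_succ_apply_zero (W N : 𝔸) (k : ℕ) : powExpIntegral W N (k + 1) 0 = 0 := by
  induction k with
  | zero => simp [powExpIntegral_succ, powExpIntegral_zero, powDivFactorial_zero]
  | succ k ih =>
    rw [powExpIntegral_succ, ih, powDivFactorial_succ_apply_zero, zero_smul, sub_zero, mul_zero]

theorem powExpIntegral_succ_mul {W N : 𝔸} (hWN : W * N = -1) (k : ℕ) (t : ℝ) :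
    powExpIntegral W N (k + 1) t * N =
      powDivFactorial k t • exp ((t : ℂ) • N) - powExpIntegral W N k t := by
  have hcomm : exp ((t : ℂ) • N) * N = N * exp ((t : ℂ) • N) :=
    ((Commute.refl N).smul_left (t : ℂ)).exp_left
  have hstep : powExpIntegral W N (k + 1) t * N =
      W * (powExpIntegral W N k t * N) + powDivFactorial k t • exp ((t : ℂ) • N) := by
    rw [powExpIntegral_succ, mul_assoc, sub_mul, smul_mul_assoc, hcomm, mul_sub, mul_smul_comm,
      ← mul_assoc W N, hWN, neg_one_mul, smul_neg, sub_neg_eq_add]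
  cases k with
  | zero => rw [hstep, powExpIntegral_zero, one_mul, hWN]; abel
  | succ k =>
    rw [hstep, powExpIntegral_succ_mul hWN k t, powExpIntegral_succ W N k t, mul_sub, mul_sub,
      mul_smul_comm]
    abel

variable [CompleteSpace 𝔸]

theorem hasDerivAt_exp_ofReal_smul (N : 𝔸) (t : ℝ) :
    HasDerivAt (fun s : ℝ => exp ((s : ℂ) • N)) (N * exp ((t : ℂ) • N)) t := by
  have h := (hasDerivAt_exp_smul_const' N (t : ℂ)).scomp t Complex.ofRealCLM.hasDerivAt
  simp only [Complex.ofRealCLM_apply, Complex.ofReal_one, one_smul] at h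
  exact h

theorem hasDerivAt_powExpIntegral_succ {W N : 𝔸} (hWN : W * N = -1) (k : ℕ) (t : ℝ) :
    HasDerivAt (powExpIntegral W N (k + 1)) (powDivFactorial k t • exp ((t : ℂ) • N)) t := by
  have hstep : ∀ {q : 𝔸} {c : ℂ}, HasDerivAt (powExpIntegral W N k) q t →
      HasDerivAt (powDivFactorial k) c t →
      HasDerivAt (powExpIntegral W N (k + 1))
        (W * q + powDivFactorial k t • exp ((t : ℂ) • N) - W * (c • exp ((t : ℂ) • N))) t := by
    intro q c hq hc
    have h := (hq.sub (hc.smul (hasDerivAt_exp_ofReal_smul N t))).const_mul W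
    convert h using 1
    · exact funext fun s => powExpIntegral_succ W N k s
    · simp only [mul_sub, mul_add, mul_smul_comm, ← mul_assoc, hWN, neg_one_mul, smul_neg]
      abel
  cases k with
  | zero =>
    have hQ : HasDerivAt (powExpIntegral W N 0) 0 t := by
      rw [funext (powExpIntegral_zero W N)]; exact hasDerivAt_const t 1
    have hc : HasDerivAt (powDivFactorial 0) 0 t := by
      rw [funext powDivFactorial_zero]; exact hasDerivAt_const t 1
    simpa using hstep hQ hc
  | succ k =>
    simpa using hstep (hasDerivAt_powExpIntegral_succ hWN k t) (hasDerivAt_powDivFactorial_succ k t)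

theorem hasDerivAt_sum_jordanChain_mul_powExpIntegral (A M G W : 𝔸) (lam : ℂ)
    (hWN : W * (lam • 1 + M) = -1) (Ah : ℕ → 𝔸) (n : ℕ) (hn : 0 < n)
    (htop : A * Ah n = lam • Ah n)
    (hchain : ∀ k, 1 ≤ k → k < n → A * Ah k = lam • Ah k + Ah (k + 1)) (t : ℝ) :
    HasDerivAt (fun s => ∑ k ∈ Icc 1 n, Ah k * G * powExpIntegral W (lam • 1 + M) k s)
      (A * (∑ k ∈ Icc 1 n, Ah k * G * powExpIntegral W (lam • 1 + M) k t)
        + (∑ k ∈ Icc 1 n, Ah k * G * powExpIntegral W (lam • 1 + M) k t) * M + Ah 1 * G) t := by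
  rw [sum_jordanChain_mul_add_mul A M G lam Ah n hn htop hchain
    (fun k => powExpIntegral W (lam • 1 + M) k t)
    (fun k => powDivFactorial k t • exp ((t : ℂ) • (lam • 1 + M)))
    (powExpIntegral_zero W _ t) (fun k => powExpIntegral_succ_mul hWN k t)]
  refine HasDerivAt.fun_sum fun k hk => ?_
  obtain ⟨k, rfl⟩ : ∃ j, k = j + 1 := ⟨k - 1, by simp at hk; omega⟩
  rw [Nat.add_sub_cancel]
  exact (hasDerivAt_powExpIntegral_succ hWN k t).const_mul _

end PowExpIntegral

theorem Matrix.inv_neg_mul_self {ι R : Type*} [Fintype ι] [DecidableEq ι] [CommRing R]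
    {N : Matrix ι ι R} (h : IsUnit N.det) : (-N)⁻¹ * N = -1 := by
  have hneg : IsUnit (-N).det := (isUnit_iff_isUnit_det _).mp ((isUnit_iff_isUnit_det N).mpr h).neg
  rw [← neg_neg ((-N)⁻¹ * N), ← mul_neg, nonsing_inv_mul _ hneg]

attribute [local instance] Matrix.normedAddCommGroup Matrix.normedSpace

theorem stmt18_general (n m p : ℕ)
    (A : Matrix (Fin n) (Fin n) ℂ) (B : Matrix (Fin n) (Fin m) ℂ)
    (lam : Fin p → ℂ)
    (nmul : Fin p → ℕ) (hpos : ∀ i, 0 < nmul i)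
    (Ahat : Fin p → ℕ → Matrix (Fin n) (Fin n) ℂ)
    (htop : ∀ i, A * Ahat i (nmul i) = lam i • Ahat i (nmul i))
    (hchain : ∀ i k, 1 ≤ k → k < nmul i →
      A * Ahat i k = lam i • Ahat i k + Ahat i (k + 1))
    (hcomplete : ∑ i, Ahat i 1 = 1)
    (hinv : ∀ i, IsUnit (lam i • (1 : Matrix (Fin n) (Fin n) ℂ) + Aᵀ).det)
    (P : ℝ → Matrix (Fin n) (Fin n) ℂ)
    (hP : P = fun t : ℝ => ∑ i, ∑ k ∈ Finset.Icc 1 (nmul i),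
        Ahat i k * (B * Bᵀ) *
          (((-(lam i) • (1 : Matrix (Fin n) (Fin n) ℂ) - Aᵀ)⁻¹ ^ k) -
            ∑ l ∈ Finset.Icc 1 k,
              ((t : ℂ) ^ (k - l) / ((k - l).factorial : ℂ)) •
                (((-(lam i) • (1 : Matrix (Fin n) (Fin n) ℂ) - Aᵀ)⁻¹ ^ l) *
                  NormedSpace.exp
                    ((t : ℂ) • (lam i • (1 : Matrix (Fin n) (Fin n) ℂ) + Aᵀ))))) :
    P 0 = 0 ∧ ∀ t : ℝ, HasDerivAt P (A * P t + P t * Aᵀ + B * Bᵀ) t := by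
  -- The operator norm makes matrices a complete normed algebra with the same topology as the
  -- entrywise norm, so the derivatives below are the ones of the statement.
  let : NormedRing (Matrix (Fin n) (Fin n) ℂ) := Matrix.linftyOpNormedRing
  let : NormedAlgebra ℂ (Matrix (Fin n) (Fin n) ℂ) := Matrix.linftyOpNormedAlgebra
  have : @CompleteSpace (Matrix (Fin n) (Fin n) ℂ) PseudoMetricSpace.toUniformSpace :=
    FiniteDimensional.complete ℂ _
  have hWN : ∀ i, (-(lam i) • (1 : Matrix (Fin n) (Fin n) ℂ) - Aᵀ)⁻¹ * (lam i • 1 + Aᵀ) = -1 := by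
    intro i
    rw [show -(lam i) • (1 : Matrix (Fin n) (Fin n) ℂ) - Aᵀ = -(lam i • 1 + Aᵀ) by
      rw [neg_smul]; abel]
    exact inv_neg_mul_self (hinv i)
  subst hP
  refine ⟨sum_eq_zero fun i _ => sum_eq_zero fun k hk => ?_, fun t => ?_⟩
  · obtain ⟨k, rfl⟩ : ∃ j, k = j + 1 := ⟨k - 1, by simp at hk; omega⟩
    exact mul_eq_zero_of_right _ (powExpIntegral_succ_apply_zero _ _ k)
  · have h := HasDerivAt.fun_sum (u := univ) fun i _ =>
      hasDerivAt_sum_jordanChain_mul_powExpIntegral A Aᵀ (B * Bᵀ) _ (lam i) (hWN i) (Ahat i)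
        (nmul i) (hpos i) (htop i) (hchain i) t
    rw [sum_add_distrib, sum_add_distrib, ← sum_mul _ _ (B * Bᵀ), hcomplete, one_mul, ← mul_sum,
      ← sum_mul _ _ Aᵀ] at h
    exact h

/-- If the matrices `Â_k^{(i)}` satisfy the resolvent partial-fraction
relations, then
`P(t) = ∑ i ∑_{k=1}^{n_i} Â_k^{(i)} B Bᵀ [(-λ_i I - Aᵀ)^{-k} -
∑_{l=1}^{k} (-λ_i I - Aᵀ)^{-l} (t^{k-l}/(k-l)!) exp((λ_i I + Aᵀ)t)]`
satisfies `P(0) = 0` and the differential Lyapunov equation `P' = A P + P Aᵀ + B Bᵀ`. -/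
theorem stmt18 (n m p : ℕ) (hp : 0 < p)
    (A : Matrix (Fin n) (Fin n) ℂ) (B : Matrix (Fin n) (Fin m) ℂ)
    (lam : Fin p → ℂ) (hdist : Function.Injective lam)
    (nmul : Fin p → ℕ) (hpos : ∀ i, 0 < nmul i) (hsum : ∑ i, nmul i = n)
    (Ahat : Fin p → ℕ → Matrix (Fin n) (Fin n) ℂ)
    (htop : ∀ i, A * Ahat i (nmul i) = lam i • Ahat i (nmul i))
    (hchain : ∀ i k, 1 ≤ k → k < nmul i →
      A * Ahat i k = lam i • Ahat i k + Ahat i (k + 1))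
    (hcomplete : ∑ i, Ahat i 1 = 1)
    (hinv : ∀ i, IsUnit (lam i • (1 : Matrix (Fin n) (Fin n) ℂ) + Aᵀ).det)
    (P : ℝ → Matrix (Fin n) (Fin n) ℂ)
    (hP : P = fun t : ℝ => ∑ i, ∑ k ∈ Finset.Icc 1 (nmul i),
        Ahat i k * (B * Bᵀ) *
          (((-(lam i) • (1 : Matrix (Fin n) (Fin n) ℂ) - Aᵀ)⁻¹ ^ k) -
            ∑ l ∈ Finset.Icc 1 k,
              ((t : ℂ) ^ (k - l) / ((k - l).factorial : ℂ)) •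
                (((-(lam i) • (1 : Matrix (Fin n) (Fin n) ℂ) - Aᵀ)⁻¹ ^ l) *
                  NormedSpace.exp
                    ((t : ℂ) • (lam i • (1 : Matrix (Fin n) (Fin n) ℂ) + Aᵀ))))) :
    P 0 = 0 ∧ ∀ t : ℝ, HasDerivAt P (A * P t + P t * Aᵀ + B * Bᵀ) t :=
  stmt18_general n m p A B lam nmul hpos Ahat htop hchain hcomplete hinv P hP
end
end
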